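/- Let X be a nonempty finite design space, let p and s be natural numbers with 0 < s and s < p, let m : X → Matrix (Fin p) (Fin p) ℝ assign to each design point a symmetric positive semidefinite matrix, and let A : Matrix (Fin p) (Fin s) ℝ have rank s. For a design w with M(w) positive definite, define the sensitivity function d(x, w) = trace(M(w)⁻¹ * A * (Aᵀ * M(w)⁻¹ * A)⁻¹ * Aᵀ * M(w)⁻¹ * m(x)). Suppose w* is a design such that M(w*) is positive definite. Then w* maximizes w ↦ -log(det(Aᵀ * M(w)⁻¹ * A)) over all designs with positive definite information matrix if and only if for every design w with M(w) positive definite, max_{x ∈ X} d(x, w*) ≤ max_{x ∈ X} d(x, w). -/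

import Mathlib

/-!
The criterion `φ(M) = -log det (Aᵀ M⁻¹ A)` is concave on positive definite matrices, with
gradient `H(M) = M⁻¹ A (Aᵀ M⁻¹ A)⁻¹ Aᵀ M⁻¹` and `tr (H(M) M) = s`: the tangent-plane inequality
`φ(M) ≤ φ(M') + tr (H(M') M) - s` follows from `log det B ≤ tr B - s` for `B > 0` and from the
Gauss–Markov theorem. Since `d(x, w) = tr (H(M(w)) m(x))` and `∑ₓ w(x) d(x, w) = s`, every design
has `max d(·, w) ≥ s`, and the tangent inequality shows that `max d(·, w*) ≤ s` makes `w*`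
optimal. Conversely, an optimal `w*` has `d(x, w*) ≤ s`, as moving towards the one-point design at
`x` cannot increase `φ`. For the minimax direction, maximizers of `φ` over the compact set
`(1 - r) M(w*) + r {M(w)}` exist and satisfy `max d ≤ s / r`; minimality of `max d(·, w*)` and
`r → 1` give `max d(·, w*) ≤ s`.
-/

open Matrix

open scoped MatrixOrder

theorem le_of_forall_mem_Ioo_le_div {c s : ℝ} (h : ∀ r ∈ Set.Ioo (0 : ℝ) 1, c ≤ s / r) :
    c ≤ s := by
  have htend : Filter.Tendsto (fun r : ℝ => s / r) (nhds 1) (nhds (s / 1)) :=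
    tendsto_const_nhds.div Filter.tendsto_id one_ne_zero
  rw [div_one] at htend
  exact ge_of_tendsto (htend.mono_left nhdsWithin_le_nhds)
    (Filter.eventually_of_mem (Ioo_mem_nhdsLT zero_lt_one) h)

theorem sum_mul_le_sup'_of_mem_stdSimplex {X : Type*} [Fintype X] [Nonempty X] {w : X → ℝ}
    (hw : w ∈ stdSimplex ℝ X) (f : X → ℝ) :
    ∑ x, w x * f x ≤ Finset.univ.sup' Finset.univ_nonempty f :=
  calc ∑ x, w x * f x ≤ ∑ x, w x * Finset.univ.sup' Finset.univ_nonempty f :=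
        Finset.sum_le_sum fun x _ =>
          mul_le_mul_of_nonneg_left (Finset.le_sup' f (Finset.mem_univ x)) (hw.1 x)
    _ = Finset.univ.sup' Finset.univ_nonempty f := by rw [← Finset.sum_mul, hw.2, one_mul]

namespace Matrix

variable {n k : Type*}

theorem mulVec_injective_of_rank_eq_card [Fintype k] {A : Matrix n k ℝ}
    (hA : A.rank = Fintype.card k) : Function.Injective A.mulVec := by
  have hrank := LinearMap.finrank_range_add_finrank_ker A.mulVecLin
  rw [← Matrix.rank, hA, Module.finrank_fintype_fun_eq_card] at hrank
  have hker : LinearMap.ker A.mulVecLin = ⊥ := Submodule.finrank_eq_zero.mp (by omega)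
  exact LinearMap.ker_eq_bot.mp hker

theorem PosSemidef.transpose_eq {M : Matrix n n ℝ} (hM : M.PosSemidef) : Mᵀ = M :=
  (isHermitian_iff_isSymm.mp hM.1).eq

variable [Fintype n]

theorem PosSemidef.trace_mul_nonneg {P Q : Matrix n n ℝ} (hP : P.PosSemidef)
    (hQ : Q.PosSemidef) : 0 ≤ (P * Q).trace := by
  classical
  set S := CFC.sqrt P
  have hS : Sᴴ = S := (CFC.sqrt_nonneg P).posSemidef.1
  have hSS : S * S = P := CFC.sqrt_mul_sqrt_self P hP.nonneg
  have hcycle : (P * Q).trace = (S * Q * Sᴴ).trace := by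
    rw [hS, ← hSS, Matrix.mul_assoc, trace_mul_comm, Matrix.mul_assoc]
  exact hcycle ▸ (hQ.mul_mul_conjTranspose_same S).trace_nonneg

theorem trace_mul_le_trace_mul_of_le {P Q R : Matrix n n ℝ} (hPQ : P ≤ Q)
    (hR : R.PosSemidef) : (P * R).trace ≤ (Q * R).trace := by
  have := (le_iff.mp hPQ).trace_mul_nonneg hR
  rwa [Matrix.sub_mul, trace_sub, sub_nonneg] at this

variable [DecidableEq n]

theorem PosDef.log_det_add_card_le_trace {B : Matrix n n ℝ} (hB : B.PosDef) :
    Real.log B.det + Fintype.card n ≤ B.trace := by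
  have hpos := hB.eigenvalues_pos
  have hlog : Real.log B.det = ∑ i, Real.log (hB.1.eigenvalues i) := by
    rw [hB.1.det_eq_prod_eigenvalues, ← Real.log_prod fun i _ => (hpos i).ne']
    simp
  have htrace : B.trace = ∑ i, hB.1.eigenvalues i := by
    simp [hB.1.trace_eq_sum_eigenvalues]
  have hsum : ∑ i, Real.log (hB.1.eigenvalues i) ≤ ∑ i, (hB.1.eigenvalues i - 1) :=
    Finset.sum_le_sum fun i _ => Real.log_le_sub_one_of_pos (hpos i)
  rw [Finset.sum_sub_distrib] at hsum
  simp only [Finset.sum_const, Finset.card_univ, nsmul_eq_mul, mul_one] at hsum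
  linarith

/-- Concavity of `log det` at `N`, in its tangent-line form. -/
theorem PosDef.log_det_sub_log_det_add_card_le_trace {N N' : Matrix n n ℝ} (hN : N.PosDef)
    (hN' : N'.PosDef) : Real.log N'.det - Real.log N.det + Fintype.card n ≤ (N⁻¹ * N').trace := by
  set R := CFC.sqrt N'
  have hR : Rᴴ = R := (CFC.sqrt_nonneg N').posSemidef.1
  have hRR : R * R = N' := CFC.sqrt_mul_sqrt_self N' hN'.posSemidef.nonneg
  have hRdet : R.det * R.det = N'.det := by rw [← det_mul, hRR]
  have hRinj : Function.Injective R.mulVec := by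
    refine mulVec_injective_iff_isUnit.mpr ((isUnit_iff_isUnit_det R).mpr (IsUnit.mk0 _ ?_))
    intro h0
    exact hN'.det_pos.ne' (by rw [← hRdet, h0, zero_mul])
  have hB : (R * N⁻¹ * R).PosDef := by
    simpa only [hR] using hN.inv.conjTranspose_mul_mul_same hRinj
  have hdet : (R * N⁻¹ * R).det = N'.det * N.det⁻¹ := by
    rw [det_mul, det_mul, det_nonsing_inv, Ring.inverse_eq_inv, ← hRdet]
    ring
  have htrace : (R * N⁻¹ * R).trace = (N⁻¹ * N').trace := by
    rw [trace_mul_comm, ← Matrix.mul_assoc, hRR, trace_mul_comm]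
  have := hB.log_det_add_card_le_trace
  rwa [hdet, htrace, Real.log_mul hN'.det_pos.ne' (inv_ne_zero hN.det_pos.ne'),
    Real.log_inv, ← sub_eq_add_neg] at this

theorem PosDef.transpose_mul_inv_mul_same [Fintype k] {M : Matrix n n ℝ}
    (hM : M.PosDef) {A : Matrix n k ℝ} (hA : Function.Injective A.mulVec) :
    (Aᵀ * M⁻¹ * A).PosDef := by
  simpa using hM.inv.conjTranspose_mul_mul_same hA

/-- Gauss–Markov, with equality at the weighted least squares left inverse
`G = (Aᵀ M⁻¹ A)⁻¹ Aᵀ M⁻¹`: `L M Lᵀ - (Aᵀ M⁻¹ A)⁻¹ = (L - G) M (L - G)ᵀ`. -/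
theorem inv_transpose_mul_inv_mul_le [Fintype k] [DecidableEq k] {M : Matrix n n ℝ}
    (hM : M.PosDef) {A : Matrix n k ℝ} (hN : IsUnit (Aᵀ * M⁻¹ * A).det) {L : Matrix k n ℝ}
    (hL : L * A = 1) : (Aᵀ * M⁻¹ * A)⁻¹ ≤ L * M * Lᵀ := by
  set N := Aᵀ * M⁻¹ * A
  set G := N⁻¹ * Aᵀ * M⁻¹
  have hMdet : IsUnit M.det := hM.det_pos.ne'.isUnit
  have hMt := hM.posSemidef.transpose_eq
  have hNt : Nᵀ = N := by simp only [N, transpose_mul, transpose_nonsing_inv, hMt,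
    transpose_transpose, Matrix.mul_assoc]
  have hGA : G * A = 1 := by
    rw [← nonsing_inv_mul N hN]
    simp only [G, N, Matrix.mul_assoc]
  have hcross : ∀ L' : Matrix k n ℝ, L' * A = 1 → L' * M * Gᵀ = N⁻¹ := by
    intro L' hL'
    calc L' * M * Gᵀ = L' * (M * M⁻¹) * A * N⁻¹ := by
          simp only [G, transpose_mul, transpose_nonsing_inv, hMt, hNt, transpose_transpose,
            Matrix.mul_assoc]
      _ = N⁻¹ := by rw [mul_nonsing_inv M hMdet, Matrix.mul_one, hL', Matrix.one_mul]
  have hsq : L * M * Lᵀ - N⁻¹ = (L - G) * M * (L - G)ᵀ := by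
    have hGL : G * M * Lᵀ = N⁻¹ := by
      rw [← transpose_transpose (G * M * Lᵀ)]
      simp only [transpose_mul, transpose_transpose, hMt, ← Matrix.mul_assoc, hcross L hL,
        transpose_nonsing_inv, hNt]
    simp only [transpose_sub, Matrix.sub_mul, Matrix.mul_sub, hcross L hL, hcross G hGA, hGL]
    abel
  rw [le_iff, hsq]
  simpa using hM.posSemidef.mul_mul_conjTranspose_same (L - G)

end Matrix

theorem ContinuousAt.matrix_mul {Y R : Type*} [TopologicalSpace Y] [TopologicalSpace R] [Mul R]
    [AddCommMonoid R] [ContinuousAdd R] [ContinuousMul R] {l m p : Type*} [Fintype m]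
    {f : Y → Matrix l m R} {g : Y → Matrix m p R} {y : Y} (hf : ContinuousAt f y)
    (hg : ContinuousAt g y) : ContinuousAt (fun z => f z * g z) y :=
  (continuous_fst.matrix_mul continuous_snd).continuousAt.comp (hf.prodMk hg)

theorem Matrix.PosDef.continuousAt_inv {n : Type*} [Fintype n] [DecidableEq n]
    {M : Matrix n n ℝ} (hM : M.PosDef) : ContinuousAt Inv.inv M :=
  continuousAt_matrix_inv M <| by
    rw [Ring.inverse_eq_inv']
    exact continuousAt_inv₀ hM.det_pos.ne'

namespace DAOptimalDesign

variable {n k X : Type*} [Fintype X]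

def infoMatrices (m : X → Matrix n n ℝ) : Set (Matrix n n ℝ) :=
  (fun w => ∑ x, w x • m x) '' stdSimplex ℝ X

theorem convex_infoMatrices (m : X → Matrix n n ℝ) : Convex ℝ (infoMatrices m) :=
  (convex_stdSimplex ℝ X).linear_image (Fintype.linearCombination ℝ m)

theorem isCompact_infoMatrices (m : X → Matrix n n ℝ) : IsCompact (infoMatrices m) :=
  (isCompact_stdSimplex ℝ X).image
    (LinearMap.continuous_of_finiteDimensional (Fintype.linearCombination ℝ m))

theorem apply_mem_infoMatrices [DecidableEq X] (m : X → Matrix n n ℝ) (x : X) :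
    m x ∈ infoMatrices m :=
  ⟨Pi.single x 1, single_mem_stdSimplex ℝ x, by simp [Pi.single_apply]⟩

theorem posSemidef_of_mem_infoMatrices [Fintype n] {m : X → Matrix n n ℝ}
    (hm : ∀ x, (m x).PosSemidef) {N : Matrix n n ℝ} (hN : N ∈ infoMatrices m) : N.PosSemidef := by
  obtain ⟨w, hw, rfl⟩ := hN
  exact posSemidef_sum _ fun x _ => (hm x).smul (hw.1 x)

theorem trace_mul_sum_smul [Fintype n] (m : X → Matrix n n ℝ) (B : Matrix n n ℝ) (w : X → ℝ) :
    (B * ∑ x, w x • m x).trace = ∑ x, w x * (B * m x).trace := by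
  simp [Matrix.mul_sum, trace_sum]

variable [Fintype n] [Fintype k] [DecidableEq n] [DecidableEq k]
  {A : Matrix n k ℝ} {M M' N : Matrix n n ℝ} {m : X → Matrix n n ℝ}

noncomputable def criterion (A : Matrix n k ℝ) (M : Matrix n n ℝ) : ℝ :=
  -Real.log (Aᵀ * M⁻¹ * A).det

/-- The gradient of `criterion A` at `M`: the sensitivity function of a design `w` is
`d(x, w) = tr (sensitivity A M(w) * m x)`. -/
noncomputable def sensitivity (A : Matrix n k ℝ) (M : Matrix n n ℝ) : Matrix n n ℝ :=
  M⁻¹ * A * (Aᵀ * M⁻¹ * A)⁻¹ * Aᵀ * M⁻¹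

theorem posSemidef_sensitivity (hA : Function.Injective A.mulVec) (hM : M.PosDef) :
    (sensitivity A M).PosSemidef := by
  have := (hM.transpose_mul_inv_mul_same hA).inv.posSemidef.mul_mul_conjTranspose_same
    (M⁻¹ * A)
  simpa [sensitivity, transpose_nonsing_inv, hM.posSemidef.transpose_eq, Matrix.mul_assoc]
    using this

theorem trace_sensitivity_mul_self (hA : Function.Injective A.mulVec) (hM : M.PosDef) :
    (sensitivity A M * M).trace = Fintype.card k := by
  have hN := (hM.transpose_mul_inv_mul_same hA).det_pos.ne'.isUnit
  rw [sensitivity, Matrix.mul_assoc _ M⁻¹ M, nonsing_inv_mul M (hM.det_pos.ne'.isUnit),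
    Matrix.mul_one, trace_mul_comm]
  simp only [← Matrix.mul_assoc]
  rw [mul_nonsing_inv _ hN, trace_one]

/-- The tangent-plane inequality of the concave function `criterion A` at `M'`; it combines
`log det` concavity on `k × k` matrices with Gauss–Markov for `L = (Aᵀ M'⁻¹ A)⁻¹ Aᵀ M'⁻¹`. -/
theorem criterion_le_add_trace_sensitivity_mul (hA : Function.Injective A.mulVec)
    (hM : M.PosDef) (hM' : M'.PosDef) :
    criterion A M ≤ criterion A M' + (sensitivity A M' * M).trace - Fintype.card k := by
  set N := Aᵀ * M⁻¹ * A
  set N' := Aᵀ * M'⁻¹ * A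
  have hN : N.PosDef := hM.transpose_mul_inv_mul_same hA
  have hN' : N'.PosDef := hM'.transpose_mul_inv_mul_same hA
  have hN'det : IsUnit N'.det := hN'.det_pos.ne'.isUnit
  set L := N'⁻¹ * Aᵀ * M'⁻¹
  have hLA : L * A = 1 := by
    rw [← nonsing_inv_mul N' hN'det]
    simp only [L, N', Matrix.mul_assoc]
  have hLt : Lᵀ = M'⁻¹ * A * N'⁻¹ := by
    simp only [L, transpose_mul, transpose_nonsing_inv, hM'.posSemidef.transpose_eq,
      hN'.posSemidef.transpose_eq, transpose_transpose, Matrix.mul_assoc]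
  have htrace : (L * M * Lᵀ * N').trace = (sensitivity A M' * M).trace := by
    simp only [hLt, Matrix.mul_assoc, nonsing_inv_mul N' hN'det, Matrix.mul_one]
    rw [← Matrix.mul_assoc, trace_mul_comm]
    simp only [sensitivity, L, N', Matrix.mul_assoc]
  have hlogdet := hN.log_det_sub_log_det_add_card_le_trace hN'
  have hgaussMarkov := trace_mul_le_trace_mul_of_le
    (inv_transpose_mul_inv_mul_le hM (hN.det_pos.ne'.isUnit) hLA) hN'.posSemidef
  unfold criterion
  linarith

theorem continuousAt_criterion (hA : Function.Injective A.mulVec) (hM : M.PosDef) :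
    ContinuousAt (criterion A) M := by
  have hN := hM.transpose_mul_inv_mul_same hA
  have hinner : ContinuousAt (fun M : Matrix n n ℝ => Aᵀ * M⁻¹ * A) M :=
    (continuousAt_const.matrix_mul hM.continuousAt_inv).matrix_mul continuousAt_const
  have hdet : ContinuousAt (fun M : Matrix n n ℝ => (Aᵀ * M⁻¹ * A).det) M :=
    (continuous_id.matrix_det).continuousAt.comp (f := fun M => Aᵀ * M⁻¹ * A) hinner
  exact (hdet.log hN.det_pos.ne').neg

theorem continuousAt_sensitivity (hA : Function.Injective A.mulVec) (hM : M.PosDef) :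
    ContinuousAt (sensitivity A) M := by
  have hinv := hM.continuousAt_inv
  have hN := hM.transpose_mul_inv_mul_same hA
  have hNinv : ContinuousAt (fun M : Matrix n n ℝ => (Aᵀ * M⁻¹ * A)⁻¹) M :=
    hN.continuousAt_inv.comp (f := fun M : Matrix n n ℝ => Aᵀ * M⁻¹ * A)
      ((continuousAt_const.matrix_mul hinv).matrix_mul continuousAt_const)
  exact ((((hinv.matrix_mul continuousAt_const).matrix_mul hNinv).matrix_mul
    continuousAt_const).matrix_mul hinv)

/-- The tangent-plane inequality at `F = (1 - t) M + t N` gives `card k ≤ tr (H(F) M)`, while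
`tr (H(F) F) = card k`. -/
theorem trace_sensitivity_mul_le_of_criterion_le (hA : Function.Injective A.mulVec)
    (hM : M.PosDef) (hN : N.PosSemidef) {t : ℝ} (ht : t ∈ Set.Ioo (0 : ℝ) 1)
    (hle : criterion A ((1 - t) • M + t • N) ≤ criterion A M) :
    (sensitivity A ((1 - t) • M + t • N) * N).trace ≤ Fintype.card k := by
  set F := (1 - t) • M + t • N
  have hF : F.PosDef := (hM.smul (sub_pos.mpr ht.2)).add_posSemidef (hN.smul ht.1.le)
  have hsupport := criterion_le_add_trace_sensitivity_mul hA hM hF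
  have hself := trace_sensitivity_mul_self hA hF
  rw [show sensitivity A F * F = (1 - t) • (sensitivity A F * M) + t • (sensitivity A F * N) by
    simp only [F, Matrix.mul_add, Matrix.mul_smul], trace_add, trace_smul, trace_smul,
    smul_eq_mul, smul_eq_mul] at hself
  nlinarith [ht.1, ht.2]

/-- The first-order optimality condition, obtained by letting `t → 0` in the secant bound above
instead of differentiating the criterion. -/
theorem trace_sensitivity_mul_le_of_isMaxOn {S : Set (Matrix n n ℝ)}
    (hA : Function.Injective A.mulVec) (hS : Convex ℝ S) (hM : M.PosDef) (hMS : M ∈ S)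
    (hmax : IsMaxOn (criterion A) {N ∈ S | N.PosDef} M) (hN : N.PosSemidef) (hNS : N ∈ S) :
    (sensitivity A M * N).trace ≤ Fintype.card k := by
  set F : ℝ → Matrix n n ℝ := fun t => (1 - t) • M + t • N
  have hF0 : F 0 = M := by simp [F]
  have hsecant : ∀ t ∈ Set.Ioo (0 : ℝ) 1, (sensitivity A (F t) * N).trace ≤ Fintype.card k :=
    fun t ht => trace_sensitivity_mul_le_of_criterion_le hA hM hN ht <|
      hmax ⟨hS hMS hNS (sub_pos.mpr ht.2).le ht.1.le (sub_add_cancel 1 t),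
        (hM.smul (sub_pos.mpr ht.2)).add_posSemidef (hN.smul ht.1.le)⟩
  have hcont : ContinuousAt (fun t => (sensitivity A (F t) * N).trace) 0 := by
    have hFc : Continuous F := by fun_prop
    refine (continuous_id.matrix_trace).continuousAt.comp
      (ContinuousAt.matrix_mul ?_ continuousAt_const)
    exact (hF0 ▸ continuousAt_sensitivity hA hM).comp hFc.continuousAt
  have := le_of_tendsto (hcont.tendsto.mono_left nhdsWithin_le_nhds)
    (Filter.eventually_of_mem (Ioo_mem_nhdsGT one_pos) hsecant)
  simpa [hF0] using this

/-- The witness maximizes the criterion over the compact set `(1 - r) M + r D`, all of whose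
members are positive definite, so that no boundary issue arises. -/
theorem exists_posDef_forall_trace_sensitivity_mul_le {D : Set (Matrix n n ℝ)}
    (hA : Function.Injective A.mulVec) (hD : Convex ℝ D) (hDc : IsCompact D)
    (hDpsd : ∀ N ∈ D, N.PosSemidef) (hM : M.PosDef) (hMD : M ∈ D) {r : ℝ}
    (hr : r ∈ Set.Ioo (0 : ℝ) 1) :
    ∃ M₀ ∈ D, M₀.PosDef ∧ ∀ N ∈ D, (sensitivity A M₀ * N).trace ≤ Fintype.card k / r := by
  set f := AffineMap.homothety M r
  have hf : ∀ N, f N = (1 - r) • M + r • N := fun N => by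
    rw [AffineMap.homothety_eq_lineMap, AffineMap.lineMap_apply_module]
  have hfpd : ∀ N ∈ D, (f N).PosDef := fun N hN =>
    hf N ▸ (hM.smul (sub_pos.mpr hr.2)).add_posSemidef ((hDpsd N hN).smul hr.1.le)
  have hfD : ∀ N ∈ D, f N ∈ D := fun N hN =>
    hf N ▸ hD hMD hN (sub_pos.mpr hr.2).le hr.1.le (sub_add_cancel 1 r)
  have hcont : ContinuousOn (criterion A) (f '' D) := by
    rintro _ ⟨N, hN, rfl⟩
    exact (continuousAt_criterion hA (hfpd N hN)).continuousWithinAt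
  obtain ⟨_, ⟨M₀, hM₀D, rfl⟩, hmax⟩ :=
    (hDc.image (AffineMap.homothety_continuous M r)).exists_isMaxOn
      ⟨f M, Set.mem_image_of_mem f hMD⟩ hcont
  refine ⟨f M₀, hfD M₀ hM₀D, hfpd M₀ hM₀D, fun N hN => ?_⟩
  have hfirst := trace_sensitivity_mul_le_of_isMaxOn hA (hD.affine_image f) (hfpd M₀ hM₀D)
    (Set.mem_image_of_mem f hM₀D) (hmax.on_subset (Set.sep_subset _ _))
    (hf N ▸ (hM.posSemidef.smul (sub_pos.mpr hr.2).le).add ((hDpsd N hN).smul hr.1.le))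
    (Set.mem_image_of_mem f hN)
  have hMnonneg := (posSemidef_sensitivity hA (hfpd M₀ hM₀D)).trace_mul_nonneg hM.posSemidef
  rw [hf N, Matrix.mul_add, Matrix.mul_smul, Matrix.mul_smul, trace_add, trace_smul, trace_smul,
    smul_eq_mul, smul_eq_mul] at hfirst
  rw [le_div_iff₀ hr.1]
  nlinarith [hr.1, hr.2]

theorem card_le_sup'_trace_sensitivity_mul [Nonempty X] (hA : Function.Injective A.mulVec)
    {w : X → ℝ} (hw : w ∈ stdSimplex ℝ X) (hwM : (∑ x, w x • m x).PosDef) :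
    (Fintype.card k : ℝ) ≤ Finset.univ.sup' Finset.univ_nonempty
      fun x => (sensitivity A (∑ y, w y • m y) * m x).trace := by
  rw [← trace_sensitivity_mul_self hA hwM, trace_mul_sum_smul]
  exact sum_mul_le_sup'_of_mem_stdSimplex hw _

theorem criterion_le_of_sup'_trace_sensitivity_mul_le [Nonempty X]
    (hA : Function.Injective A.mulVec) {w v : X → ℝ} (hwM : (∑ x, w x • m x).PosDef)
    (hv : v ∈ stdSimplex ℝ X) (hvM : (∑ x, v x • m x).PosDef)
    (hsup : Finset.univ.sup' Finset.univ_nonempty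
      (fun x => (sensitivity A (∑ y, w y • m y) * m x).trace) ≤ Fintype.card k) :
    criterion A (∑ x, v x • m x) ≤ criterion A (∑ x, w x • m x) := by
  have hsupport := criterion_le_add_trace_sensitivity_mul hA hvM hwM
  rw [trace_mul_sum_smul] at hsupport
  linarith [sum_mul_le_sup'_of_mem_stdSimplex hv
    fun x => (sensitivity A (∑ y, w y • m y) * m x).trace]

end DAOptimalDesign

open DAOptimalDesign

theorem DA_optimality_minimax_sensitivity_general
    {X : Type*} [Fintype X] [Nonempty X] (p s : ℕ)
    (m : X → Matrix (Fin p) (Fin p) ℝ) (hm : ∀ x, (m x).PosSemidef)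
    (A : Matrix (Fin p) (Fin s) ℝ) (hA : A.rank = s)
    (d : X → (X → ℝ) → ℝ)
    (hd : ∀ x w, d x w =
      ((∑ y, w y • m y)⁻¹ * A * (Aᵀ * (∑ y, w y • m y)⁻¹ * A)⁻¹ * Aᵀ *
          (∑ y, w y • m y)⁻¹ * m x).trace)
    (wstar : X → ℝ) (hw0 : ∀ x, 0 ≤ wstar x) (hw1 : ∑ x, wstar x = 1)
    (hM : (∑ x, wstar x • m x).PosDef) :
    (∀ w : X → ℝ, (∀ x, 0 ≤ w x) → ∑ x, w x = 1 → (∑ x, w x • m x).PosDef →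
        -Real.log (Aᵀ * (∑ x, w x • m x)⁻¹ * A).det ≤
          -Real.log (Aᵀ * (∑ x, wstar x • m x)⁻¹ * A).det) ↔
      (∀ w : X → ℝ, (∀ x, 0 ≤ w x) → ∑ x, w x = 1 → (∑ x, w x • m x).PosDef →
        (Finset.univ.sup' Finset.univ_nonempty (fun x => d x wstar)) ≤
          (Finset.univ.sup' Finset.univ_nonempty (fun x => d x w))) := by
  classical
  have hA' : Function.Injective A.mulVec :=
    Matrix.mulVec_injective_of_rank_eq_card (by rw [hA, Fintype.card_fin])
  obtain rfl : d = fun x w => (sensitivity A (∑ y, w y • m y) * m x).trace := funext₂ hd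
  have hstar : ∑ x, wstar x • m x ∈ infoMatrices m := ⟨wstar, ⟨hw0, hw1⟩, rfl⟩
  constructor
  · intro hopt w hw0' hw1' hwM
    have hmax : IsMaxOn (criterion A) {N ∈ infoMatrices m | N.PosDef} (∑ x, wstar x • m x) := by
      rintro _ ⟨⟨v, hv, rfl⟩, hvM⟩
      exact hopt v hv.1 hv.2 hvM
    refine le_trans (Finset.sup'_le _ _ fun x _ => ?_)
      (card_le_sup'_trace_sensitivity_mul hA' ⟨hw0', hw1'⟩ hwM)
    exact trace_sensitivity_mul_le_of_isMaxOn hA' (convex_infoMatrices m) hM hstar hmax (hm x)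
      (apply_mem_infoMatrices m x)
  · intro hmin w hw0' hw1' hwM
    refine criterion_le_of_sup'_trace_sensitivity_mul_le hA' hM ⟨hw0', hw1'⟩ hwM
      (le_of_forall_mem_Ioo_le_div fun r hr => ?_)
    obtain ⟨_, ⟨w₀, hw₀, rfl⟩, hw₀M, hle⟩ := exists_posDef_forall_trace_sensitivity_mul_le hA'
      (convex_infoMatrices m) (isCompact_infoMatrices m)
      (fun _ hN => posSemidef_of_mem_infoMatrices hm hN) hM hstar hr
    exact (hmin w₀ hw₀.1 hw₀.2 hw₀M).trans
      (Finset.sup'_le _ _ fun x _ => hle _ (apply_mem_infoMatrices m x))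

/-- Kiefer–Wolfowitz type equivalence theorem for `D_A`-optimality,
equivalence (1) ⇔ (3) of Theorem 1: the `D_A`-optimal design minimizes the
maximum of the sensitivity function over the design space. -/
theorem DA_optimality_minimax_sensitivity
    {X : Type*} [Fintype X] [Nonempty X] (p s : ℕ) (hs : 0 < s) (hsp : s < p)
    (m : X → Matrix (Fin p) (Fin p) ℝ) (hm : ∀ x, (m x).PosSemidef)
    (A : Matrix (Fin p) (Fin s) ℝ) (hA : A.rank = s)
    (d : X → (X → ℝ) → ℝ)
    (hd : ∀ x w, d x w =
      ((∑ y, w y • m y)⁻¹ * A * (Aᵀ * (∑ y, w y • m y)⁻¹ * A)⁻¹ * Aᵀ *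
          (∑ y, w y • m y)⁻¹ * m x).trace)
    (wstar : X → ℝ) (hw0 : ∀ x, 0 ≤ wstar x) (hw1 : ∑ x, wstar x = 1)
    (hM : (∑ x, wstar x • m x).PosDef) :
    (∀ w : X → ℝ, (∀ x, 0 ≤ w x) → ∑ x, w x = 1 → (∑ x, w x • m x).PosDef →
        -Real.log (Aᵀ * (∑ x, w x • m x)⁻¹ * A).det ≤
          -Real.log (Aᵀ * (∑ x, wstar x • m x)⁻¹ * A).det) ↔
      (∀ w : X → ℝ, (∀ x, 0 ≤ w x) → ∑ x, w x = 1 → (∑ x, w x • m x).PosDef →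
        (Finset.univ.sup' Finset.univ_nonempty (fun x => d x wstar)) ≤
          (Finset.univ.sup' Finset.univ_nonempty (fun x => d x w))) :=
  DA_optimality_minimax_sensitivity_general p s m hm A hA d hd wstar hw0 hw1 hM
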